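/- In a balanced strictly binary tree with u leaves, if r nodes with pairwise-disjoint leaf sets exactly cover a contiguous range of leaves, then the total number of distinct ancestors of these r nodes is O(r + log u). Specifically it is at most 2r + 2·⌈log₂ u⌉ + O(1). -/

import Mathlib

/-- A strictly binary tree with natural-number-labeled leaves (a wavelet tree shape). -/
inductive BTree where
  | leaf : ℕ → BTree
  | node : BTree → BTree → BTree

namespace BTree

/-- The leaves of the tree, in left-to-right order. -/
def leaves : BTree → List ℕ
  | leaf a => [a]
  | node l r => l.leaves ++ r.leaves

/-- Number of leaves. -/
def numLeaves (t : BTree) : ℕ := t.leaves.length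

/-- Balanced: at every node, the numbers of leaves of the two subtrees differ by at most 1. -/
def balanced : BTree → Prop
  | leaf _ => True
  | node l r => ((l.numLeaves : ℤ) - (r.numLeaves : ℤ) ≤ 1) ∧
      ((r.numLeaves : ℤ) - (l.numLeaves : ℤ) ≤ 1) ∧ l.balanced ∧ r.balanced

/-- A (root-to-node) path, given as a list of booleans (`false` = go left). -/
def validPath : BTree → List Bool → Prop
  | _, [] => True
  | leaf _, _ :: _ => False
  | node l r, b :: p => if b then r.validPath p else l.validPath p

/-- The subtree reached by following a path. -/
def subtreeAt : BTree → List Bool → Option BTree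
  | t, [] => some t
  | leaf _, _ :: _ => none
  | node l r, b :: p => if b then r.subtreeAt p else l.subtreeAt p

/-- The index (0-based, in left-to-right leaf order) of the first leaf below the node at a path. -/
def pathOffset : BTree → List Bool → ℕ
  | _, [] => 0
  | leaf _, _ :: _ => 0
  | node l r, b :: p => if b then l.numLeaves + r.pathOffset p else l.pathOffset p

/-- Number of leaves below the node at a path (0 if the path is invalid). -/
def pathLeaves (t : BTree) (p : List Bool) : ℕ := ((t.subtreeAt p).map numLeaves).getD 0

/-- The set of (positions of) leaves descending from the node at a path. -/
def leafInterval (t : BTree) (p : List Bool) : Finset ℕ :=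
  Finset.Ico (t.pathOffset p) (t.pathOffset p + t.pathLeaves p)

end BTree

/-! The ancestors of the nodes `P` form a prefix-closed set `A` of paths whose childless members
lie in `P`. Giving every member of `A` weight `2`, and letting members with two or more children
pass that weight on to their children, shows `|A| ≤ 2 · #childless + #unary`. A member of `A` with
exactly one child in `A` has a leaf interval that meets the covered range `[a, a + ℓ)` but is not
contained in it, so it contains leaf `a - 1` or leaf `a + ℓ`. The nodes containing a fixed leaf lie
on one root path, one per depth, and in a balanced tree a node with a child has depth below
`⌈log₂ u⌉`; hence there are at most `2 ⌈log₂ u⌉` unary members. -/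

namespace BTree

lemma numLeaves_pos (t : BTree) : 0 < t.numLeaves := by
  induction t with
  | leaf a => simp [numLeaves, leaves]
  | node l r ihl ihr => simp only [numLeaves, leaves, List.length_append] at *; omega

lemma numLeaves_node (l r : BTree) : (node l r).numLeaves = l.numLeaves + r.numLeaves := by
  simp [numLeaves, leaves]

@[simp] lemma validPath_nil (t : BTree) : t.validPath [] := by cases t <;> trivial

@[simp] lemma not_validPath_leaf_cons (a : ℕ) (b : Bool) (p : List Bool) :
    ¬ (leaf a).validPath (b :: p) := id

@[simp] lemma validPath_node_false (l r : BTree) (p : List Bool) :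
    (node l r).validPath (false :: p) ↔ l.validPath p := by simp [validPath]

@[simp] lemma validPath_node_true (l r : BTree) (p : List Bool) :
    (node l r).validPath (true :: p) ↔ r.validPath p := by simp [validPath]

@[simp] lemma pathLeaves_nil (t : BTree) : t.pathLeaves [] = t.numLeaves := by cases t <;> rfl

@[simp] lemma pathLeaves_node_false (l r : BTree) (p : List Bool) :
    (node l r).pathLeaves (false :: p) = l.pathLeaves p := by simp [pathLeaves, subtreeAt]

@[simp] lemma pathLeaves_node_true (l r : BTree) (p : List Bool) :
    (node l r).pathLeaves (true :: p) = r.pathLeaves p := by simp [pathLeaves, subtreeAt]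

@[simp] lemma pathOffset_nil (t : BTree) : t.pathOffset [] = 0 := by cases t <;> rfl

@[simp] lemma pathOffset_node_false (l r : BTree) (p : List Bool) :
    (node l r).pathOffset (false :: p) = l.pathOffset p := by simp [pathOffset]

@[simp] lemma pathOffset_node_true (l r : BTree) (p : List Bool) :
    (node l r).pathOffset (true :: p) = l.numLeaves + r.pathOffset p := by simp [pathOffset]

lemma validPath_of_prefix {t : BTree} {p q : List Bool} (h : t.validPath p) (hqp : q <+: p) :
    t.validPath q := by
  induction q generalizing t p with
  | nil => simp
  | cons b q ih =>
    obtain ⟨s, rfl⟩ := hqp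
    cases t with
    | leaf a => exact h
    | node l r => cases b <;> simp only [List.cons_append, validPath_node_false,
        validPath_node_true] at h ⊢ <;> exact ih h (List.prefix_append q s)

lemma validPath_sibling {t : BTree} {p : List Bool} {b : Bool} (h : t.validPath (p ++ [b]))
    (b' : Bool) : t.validPath (p ++ [b']) := by
  induction p generalizing t with
  | nil => cases t with
    | leaf a => simp at h
    | node l r => cases b' <;> simp
  | cons c p ih => cases t with
    | leaf a => simp at h
    | node l r => cases c <;> simp only [List.cons_append, validPath_node_false,
        validPath_node_true] at h ⊢ <;> exact ih h

lemma pathLeaves_pos {t : BTree} {p : List Bool} (h : t.validPath p) : 0 < t.pathLeaves p := by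
  induction p generalizing t with
  | nil => simpa using t.numLeaves_pos
  | cons b p ih => cases t with
    | leaf a => simp at h
    | node l r => cases b <;> simp only [validPath_node_false, validPath_node_true,
        pathLeaves_node_false, pathLeaves_node_true] at h ⊢ <;> exact ih h

lemma pathOffset_mem_leafInterval {t : BTree} {p : List Bool} (h : t.validPath p) :
    t.pathOffset p ∈ t.leafInterval p := by
  simpa [leafInterval] using pathLeaves_pos h

lemma pathOffset_add_pathLeaves_le {t : BTree} {p : List Bool} (h : t.validPath p) :
    t.pathOffset p + t.pathLeaves p ≤ t.numLeaves := by
  induction p generalizing t with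
  | nil => simp
  | cons b p ih => cases t with
    | leaf a => simp at h
    | node l r =>
      rw [numLeaves_node]
      cases b <;> simp only [validPath_node_false, validPath_node_true] at h <;>
        simp only [pathOffset_node_false, pathOffset_node_true, pathLeaves_node_false,
          pathLeaves_node_true] <;> have := ih h <;> omega

lemma leafInterval_subset_of_prefix {t : BTree} {p q : List Bool} (h : t.validPath p)
    (hqp : q <+: p) : t.leafInterval p ⊆ t.leafInterval q := by
  obtain ⟨s, rfl⟩ := hqp
  suffices t.pathOffset q ≤ t.pathOffset (q ++ s) ∧
      t.pathOffset (q ++ s) + t.pathLeaves (q ++ s) ≤ t.pathOffset q + t.pathLeaves q from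
    Finset.Ico_subset_Ico this.1 this.2
  induction q generalizing t with
  | nil => simpa using pathOffset_add_pathLeaves_le h
  | cons b q ih => cases t with
    | leaf a => simp at h
    | node l r =>
      cases b <;> simp only [List.cons_append, validPath_node_false, validPath_node_true] at h <;>
        simp only [List.cons_append, pathOffset_node_false, pathOffset_node_true,
          pathLeaves_node_false, pathLeaves_node_true] <;> have := ih h <;> omega

lemma prefix_or_prefix_of_mem_leafInterval {t : BTree} {p q : List Bool} {x : ℕ}
    (hp : t.validPath p) (hq : t.validPath q) (hxp : x ∈ t.leafInterval p)
    (hxq : x ∈ t.leafInterval q) : p <+: q ∨ q <+: p := by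
  induction p generalizing t q x with
  | nil => exact Or.inl List.nil_prefix
  | cons b p ih => cases q with
    | nil => exact Or.inr List.nil_prefix
    | cons c q => cases t with
      | leaf a => simp at hp
      | node l r =>
        simp only [leafInterval, Finset.mem_Ico] at hxp hxq
        have hcons {u : BTree} {x : ℕ} (hp : u.validPath p) (hq : u.validPath q)
            (hxp : x ∈ u.leafInterval p) (hxq : x ∈ u.leafInterval q) :
            b :: p <+: b :: q ∨ b :: q <+: b :: p := by
          simpa only [List.cons_prefix_cons, true_and] using ih hp hq hxp hxq
        cases b <;> cases c <;> simp only [validPath_node_false, validPath_node_true,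
          pathOffset_node_false, pathOffset_node_true, pathLeaves_node_false,
          pathLeaves_node_true] at hp hq hxp hxq
        · exact hcons hp hq (x := x) (by simp [leafInterval]; omega) (by simp [leafInterval]; omega)
        · have := pathOffset_add_pathLeaves_le hp; omega
        · have := pathOffset_add_pathLeaves_le hq; omega
        · exact hcons hp hq (x := x - l.numLeaves) (by simp [leafInterval]; omega)
            (by simp [leafInterval]; omega)

lemma card_le_of_forall_mem_leafInterval {t : BTree} {x d : ℕ} {S : Finset (List Bool)}
    (hS : ∀ v ∈ S, t.validPath v ∧ x ∈ t.leafInterval v ∧ v.length < d) : S.card ≤ d := by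
  calc S.card ≤ (Finset.range d).card := by
        refine Finset.card_le_card_of_injOn List.length (fun v hv => ?_) fun v hv w hw hvw => ?_
        · simpa using (hS v hv).2.2
        · obtain ⟨hv, hxv, -⟩ := hS v hv
          obtain ⟨hw, hxw, -⟩ := hS w hw
          rcases prefix_or_prefix_of_mem_leafInterval hv hw hxv hxw with h | h
          · exact h.eq_of_length hvw
          · exact (h.eq_of_length hvw.symm).symm
    _ = d := Finset.card_range d

lemma length_le_of_numLeaves_le_pow {t : BTree} (hb : t.balanced) {p : List Bool}
    (hp : t.validPath p) {k : ℕ} (hk : t.numLeaves ≤ 2 ^ k) : p.length ≤ k := by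
  induction p generalizing t k with
  | nil => simp
  | cons b p ih => cases t with
    | leaf a => simp at hp
    | node l r =>
      obtain ⟨hlr, hrl, hbl, hbr⟩ := hb
      rw [numLeaves_node] at hk
      have := l.numLeaves_pos
      have := r.numLeaves_pos
      cases k with
      | zero => simp at hk; omega
      | succ k =>
        rw [pow_succ] at hk
        rw [List.length_cons, Nat.add_le_add_iff_right]
        cases b <;> simp only [validPath_node_false, validPath_node_true] at hp
        · exact ih hbl hp (by omega)
        · exact ih hbr hp (by omega)

lemma length_le_clog {t : BTree} (hb : t.balanced) {p : List Bool} (hp : t.validPath p) :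
    p.length ≤ Nat.clog 2 t.numLeaves :=
  length_le_of_numLeaves_le_pow hb hp (Nat.le_pow_clog one_lt_two _)

end BTree

namespace Trie

variable {α : Type*} [DecidableEq α]

def ancestors (P : Finset (List α)) : Finset (List α) := P.biUnion fun p => p.inits.toFinset

def children (A : Finset (List α)) (v : List α) : Finset (List α) :=
  A.filter fun w => w ≠ [] ∧ w.dropLast = v

lemma mem_ancestors {P : Finset (List α)} {v : List α} :
    v ∈ ancestors P ↔ ∃ p ∈ P, v <+: p := by
  simp [ancestors, List.mem_inits]

lemma mem_children {A : Finset (List α)} {v w : List α} :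
    w ∈ children A v ↔ w ∈ A ∧ ∃ b, w = v ++ [b] := by
  simp only [children, Finset.mem_filter, and_congr_right_iff]
  refine fun _ => ⟨fun ⟨hw, hv⟩ => ⟨w.getLast hw, ?_⟩, ?_⟩
  · rw [← hv, List.dropLast_append_getLast]
  · rintro ⟨b, rfl⟩
    simp

lemma sum_card_children_le_card (A : Finset (List α)) :
    ∑ v ∈ A, (children A v).card ≤ A.card := by
  rw [← Finset.card_biUnion]
  · exact Finset.card_le_card (Finset.biUnion_subset.2 fun v _ => Finset.filter_subset _ _)
  · intro v _ v' _ hvv'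
    refine Finset.disjoint_left.2 fun w hw hw' => hvv' ?_
    simp only [children, Finset.mem_filter] at hw hw'
    rw [← hw.2.2, hw'.2.2]

theorem card_le_two_mul_card_childless_add_card_unary (A : Finset (List α)) :
    A.card ≤ 2 * (A.filter fun v => (children A v).card = 0).card +
      (A.filter fun v => (children A v).card = 1).card := by
  have hpoint : ∀ v ∈ A, 2 ≤ 2 * (if (children A v).card = 0 then 1 else 0) +
      (if (children A v).card = 1 then 1 else 0) + (children A v).card := by
    intro v _
    split_ifs <;> omega
  have := Finset.sum_le_sum hpoint
  rw [Finset.sum_add_distrib, Finset.sum_add_distrib, ← Finset.mul_sum, ← Finset.card_filter,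
    ← Finset.card_filter, Finset.sum_const, smul_eq_mul] at this
  have := sum_card_children_le_card A
  omega

lemma filter_card_children_eq_zero_ancestors_subset (P : Finset (List α)) :
    ((ancestors P).filter fun v => (children (ancestors P) v).card = 0) ⊆ P := by
  intro v hv
  obtain ⟨hv, h⟩ := Finset.mem_filter.1 hv
  obtain ⟨p, hp, s, rfl⟩ := mem_ancestors.1 hv
  cases s with
  | nil => simpa using hp
  | cons b s =>
    have : v ++ [b] ∈ children (ancestors P) v :=
      mem_children.2 ⟨mem_ancestors.2 ⟨_, hp, s, by simp⟩, b, rfl⟩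
    simp [Finset.card_eq_zero.1 h] at this

lemma exists_mem_not_mem_of_card_children_eq_one {A : Finset (List Bool)} {v : List Bool}
    (h : (children A v).card = 1) : ∃ b, v ++ [b] ∈ A ∧ v ++ [!b] ∉ A := by
  obtain ⟨w, hw⟩ := Finset.card_eq_one.1 h
  obtain ⟨hwA, b, rfl⟩ := mem_children.1 (hw ▸ Finset.mem_singleton_self _)
  refine ⟨b, hwA, fun hA => ?_⟩
  have : v ++ [!b] ∈ children A v := mem_children.2 ⟨hA, _, rfl⟩
  simp [hw] at this

end Trie

namespace BTree

open Trie

structure CoversRange (t : BTree) (P : Finset (List Bool)) (a ℓ : ℕ) : Prop where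
  validPath : ∀ p ∈ P, t.validPath p
  pairwise_disjoint : (P : Set (List Bool)).Pairwise fun p q =>
    Disjoint (t.leafInterval p) (t.leafInterval q)
  biUnion_eq : P.biUnion t.leafInterval = Finset.Ico a (a + ℓ)

namespace CoversRange

variable {t : BTree} {P : Finset (List Bool)} {a ℓ : ℕ}

lemma eq_of_prefix (hP : t.CoversRange P a ℓ) {p q : List Bool} (hp : p ∈ P) (hq : q ∈ P)
    (hpq : p <+: q) : p = q := by
  by_contra hne
  have hx := pathOffset_mem_leafInterval (hP.validPath q hq)
  exact Finset.disjoint_left.1 (hP.pairwise_disjoint hp hq hne)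
    (leafInterval_subset_of_prefix (hP.validPath q hq) hpq hx) hx

lemma validPath_of_mem_ancestors (hP : t.CoversRange P a ℓ) {v : List Bool}
    (hv : v ∈ ancestors P) : t.validPath v := by
  obtain ⟨p, hp, hvp⟩ := mem_ancestors.1 hv
  exact validPath_of_prefix (hP.validPath p hp) hvp

lemma exists_mem_leafInterval_of_mem_ancestors (hP : t.CoversRange P a ℓ) {v : List Bool}
    (hv : v ∈ ancestors P) : ∃ x ∈ t.leafInterval v, x ∈ Finset.Ico a (a + ℓ) := by
  obtain ⟨p, hp, hvp⟩ := mem_ancestors.1 hv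
  have hx := pathOffset_mem_leafInterval (hP.validPath p hp)
  refine ⟨_, leafInterval_subset_of_prefix (hP.validPath p hp) hvp hx, ?_⟩
  rw [← hP.biUnion_eq]
  exact Finset.mem_biUnion.2 ⟨p, hp, hx⟩

/-- The first leaf below the missing sibling `v ++ [!b]` is covered by some `p ∈ P`; `p` cannot lie
below that sibling, and if it lay above it, it would be a proper prefix of a member of `P` below
`v ++ [b]`. -/
lemma not_leafInterval_subset (hP : t.CoversRange P a ℓ) {v : List Bool} {b : Bool}
    (hb : v ++ [b] ∈ ancestors P) (hnb : v ++ [!b] ∉ ancestors P) :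
    ¬ t.leafInterval v ⊆ Finset.Ico a (a + ℓ) := by
  intro hsub
  have hs := validPath_sibling (hP.validPath_of_mem_ancestors hb) (!b)
  have hx := pathOffset_mem_leafInterval hs
  have hxv := hsub (leafInterval_subset_of_prefix hs (List.prefix_append v _) hx)
  rw [← hP.biUnion_eq, Finset.mem_biUnion] at hxv
  obtain ⟨p, hp, hxp⟩ := hxv
  rcases prefix_or_prefix_of_mem_leafInterval hs (hP.validPath p hp) hx hxp with hsp | hps
  · exact hnb (mem_ancestors.2 ⟨p, hp, hsp⟩)
  · have hpv : p <+: v := (List.prefix_concat_iff.1 hps).resolve_left fun h =>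
      hnb (mem_ancestors.2 ⟨p, hp, h ▸ List.prefix_refl p⟩)
    obtain ⟨q, hq, hbq⟩ := mem_ancestors.1 hb
    have hpq := hP.eq_of_prefix hp hq (hpv.trans ((List.prefix_append v _).trans hbq))
    have := hpv.length_le
    have := hbq.length_le
    simp only [hpq, List.length_append, List.length_singleton] at *
    omega

lemma mem_leafInterval_of_unary (hP : t.CoversRange P a ℓ) {v : List Bool} {b : Bool}
    (hv : v ∈ ancestors P) (hb : v ++ [b] ∈ ancestors P) (hnb : v ++ [!b] ∉ ancestors P) :
    a - 1 ∈ t.leafInterval v ∨ a + ℓ ∈ t.leafInterval v := by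
  obtain ⟨x, hxv, hx⟩ := hP.exists_mem_leafInterval_of_mem_ancestors hv
  have hns := hP.not_leafInterval_subset hb hnb
  simp only [leafInterval, Finset.mem_Ico, Finset.subset_iff] at hxv hx hns ⊢
  by_contra! h
  exact hns fun y hy => by omega

lemma card_unary_le (hP : t.CoversRange P a ℓ) (hbal : t.balanced) :
    ((ancestors P).filter fun v => (children (ancestors P) v).card = 1).card ≤
      2 * Nat.clog 2 t.numLeaves := by
  set U := (ancestors P).filter fun v => (children (ancestors P) v).card = 1
  have hU (x : ℕ) : (U.filter fun v => x ∈ t.leafInterval v).card ≤ Nat.clog 2 t.numLeaves := by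
    refine card_le_of_forall_mem_leafInterval (t := t) (x := x) fun v hv => ?_
    simp only [U, Finset.mem_filter] at hv
    obtain ⟨⟨hvA, hv1⟩, hxv⟩ := hv
    obtain ⟨b, hb, -⟩ := exists_mem_not_mem_of_card_children_eq_one hv1
    have := length_le_clog hbal (hP.validPath_of_mem_ancestors hb)
    rw [List.length_append, List.length_singleton] at this
    exact ⟨hP.validPath_of_mem_ancestors hvA, hxv, this⟩
  have hsplit : U = U.filter fun v => a - 1 ∈ t.leafInterval v ∨ a + ℓ ∈ t.leafInterval v := by
    refine (Finset.filter_true_of_mem fun v hv => ?_).symm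
    simp only [U, Finset.mem_filter] at hv
    obtain ⟨b, hb, hnb⟩ := exists_mem_not_mem_of_card_children_eq_one hv.2
    exact hP.mem_leafInterval_of_unary hv.1 hb hnb
  rw [hsplit, Finset.filter_or, two_mul]
  exact (Finset.card_union_le _ _).trans (add_le_add (hU _) (hU _))

end CoversRange

end BTree

/-- In a balanced strictly binary tree with `u` leaves, if `r` nodes with pairwise-disjoint
leaf sets exactly cover a contiguous range of leaves, then the total number of distinct
ancestors of these `r` nodes (ancestors including the nodes themselves) is at most
`2r + 2⌈log₂ u⌉ + O(1)`. -/
theorem ancestors_of_covering_nodes :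
    ∃ C : ℕ,
      ∀ (t : BTree) (P : Finset (List Bool)) (a ℓ : ℕ),
        t.balanced → (∀ p ∈ P, t.validPath p) →
        ((P : Set (List Bool)).Pairwise fun p q =>
          Disjoint (t.leafInterval p) (t.leafInterval q)) →
        P.biUnion (t.leafInterval) = Finset.Ico a (a + ℓ) →
        (P.biUnion fun p => p.inits.toFinset).card ≤
          2 * P.card + 2 * Nat.clog 2 t.numLeaves + C := by
  refine ⟨0, fun t P a ℓ hbal hvalid hdisj hcover => ?_⟩
  have hP : t.CoversRange P a ℓ := ⟨hvalid, hdisj, hcover⟩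
  show (Trie.ancestors P).card ≤ 2 * P.card + 2 * Nat.clog 2 t.numLeaves
  exact (Trie.card_le_two_mul_card_childless_add_card_unary (Trie.ancestors P)).trans <|
    add_le_add (Nat.mul_le_mul_left 2 (Finset.card_le_card
      (Trie.filter_card_children_eq_zero_ancestors_subset P))) (hP.card_unary_le hbal)
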